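/- arXiv:2210.17520 — 3 statements merged into one kernel-verified Lean document; each statement's English description precedes it below -/
import Mathlib

section
/- The canonical Cholesky factor of a positive semidefinite matrix is unique: if L and L' are both lower-triangular real T×T matrices with nonnegative diagonal entries such that L Lᵀ = L' L'ᵀ = Σ, each having exactly rank(Σ) strictly positive diagonal entries, and each having all columns with zero diagonal entry entirely zero, then L = L'. -/
open Matrix

/-- `L` is the canonical Cholesky factor of `S`: it is lower triangular with nonnegative
diagonal entries, `L * Lᵀ = S`, the number of strictly positive diagonal entries of `L`
equals `rank S`, and every column of `L` whose diagonal entry is zero is entirely zero. -/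
def IsCanonicalCholesky {T : ℕ} (S L : Matrix (Fin T) (Fin T) ℝ) : Prop :=
  (∀ i j : Fin T, i < j → L i j = 0) ∧
  (∀ i : Fin T, 0 ≤ L i i) ∧
  L * Lᵀ = S ∧
  (Finset.univ.filter fun i : Fin T => 0 < L i i).card = S.rank ∧
  (∀ j : Fin T, L j j = 0 → ∀ i : Fin T, L i j = 0)

/-- The canonical Cholesky factor of a positive semidefinite matrix is unique. -/
theorem canonical_cholesky_unique (T : ℕ) (S : Matrix (Fin T) (Fin T) ℝ)
    (hS : S.PosSemidef) (L L' : Matrix (Fin T) (Fin T) ℝ)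
    (hL : IsCanonicalCholesky S L) (hL' : IsCanonicalCholesky S L') :
    L = L' := by
  obtain ⟨hlt, hnn, hmul, _, hcol⟩ := hL
  obtain ⟨hlt', hnn', hmul', _, hcol'⟩ := hL'
  have hS : L * Lᵀ = L' * L'ᵀ := hmul.trans hmul'.symm
  have hentry : ∀ i j : Fin T, ∑ k, L i k * L j k = ∑ k, L' i k * L' j k := by
    intro i j
    have := congrFun (congrFun hS i) j
    simpa [Matrix.mul_apply, Matrix.transpose_apply] using this
  have H : ∀ n : ℕ, ∀ j : Fin T, (j : ℕ) < n → ∀ i : Fin T, L i j = L' i j := by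
    intro n
    induction n with
    | zero => intro j h; exact absurd h (Nat.not_lt_zero _)
    | succ n ihn =>
      intro j hj
      have ih : ∀ k : Fin T, k < j → ∀ i : Fin T, L i k = L' i k := fun k hk =>
        ihn k (by have := Fin.lt_def.mp hk; omega)
      -- first: diagonal entries agree
      have hoff : ∀ k : Fin T, k ≠ j → L j k = L' j k := by
        intro k hk
        rcases lt_or_gt_of_ne hk with h | h
        · exact ih k h j
        · rw [hlt j k h, hlt' j k h]
      have hsum := hentry j j
      have hsplit : ∀ k ∈ Finset.univ.erase j, L j k * L j k = L' j k * L' j k := by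
        intro k hk
        rw [hoff k (Finset.mem_erase.mp hk).1]
      have hdd : L j j * L j j = L' j j * L' j j := by
        have h1 := Finset.add_sum_erase Finset.univ (fun k => L j k * L j k)
          (Finset.mem_univ j)
        have h2 := Finset.add_sum_erase Finset.univ (fun k => L' j k * L' j k)
          (Finset.mem_univ j)
        have := hsum
        rw [← h1, ← h2, Finset.sum_congr rfl hsplit] at this
        exact add_right_cancel this
      have hdiag : L j j = L' j j := by
        rcases mul_self_eq_mul_self_iff.mp hdd with h | h
        · exact h
        · have h1 : L' j j ≤ 0 := by linarith [hnn j]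
          have h2 : L' j j = 0 := le_antisymm h1 (hnn' j)
          rw [h2] at h ⊢; simpa using h
      intro i
      by_cases hz : L j j = 0
      · rw [hcol j hz i, hcol' j (hdiag ▸ hz) i]
      · have hsum' := hentry i j
        have hsplit' : ∀ k ∈ Finset.univ.erase j, L i k * L j k = L' i k * L' j k := by
          intro k hk
          have hkj := (Finset.mem_erase.mp hk).1
          rcases lt_or_gt_of_ne hkj with h | h
          · rw [ih k h i, ih k h j]
          · rw [hlt j k h, hlt' j k h, mul_zero, mul_zero]
        have h1 := Finset.add_sum_erase Finset.univ (fun k => L i k * L j k)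
          (Finset.mem_univ j)
        have h2 := Finset.add_sum_erase Finset.univ (fun k => L' i k * L' j k)
          (Finset.mem_univ j)
        rw [← h1, ← h2, Finset.sum_congr rfl hsplit'] at hsum'
        have := add_right_cancel hsum'
        rw [← hdiag] at this
        exact mul_right_cancel₀ hz this
  ext i j
  exact H ((j : ℕ) + 1) j (Nat.lt_succ_self _) i
end

section
/- Let Σ be a positive semidefinite real T×T matrix with canonical Cholesky factor L. For every i with 1 ≤ i ≤ T, the leading principal i×i submatrix L_i of L (the restriction of L to its first i rows and columns) is the canonical Cholesky factor of the leading principal i×i submatrix of Σ; in particular L_i L_iᵀ equals the leading principal i×i submatrix of Σ. -/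
open Matrix

/-!
Since `L` is lower triangular, entry `(a, b)` of `L * Lᵀ` only involves the columns
`k ≤ min a b`, so the leading block of `L * Lᵀ` is `Lᵢ * Lᵢᵀ`. Hence `rank Sᵢ = rank Lᵢ`, and the
rank of a lower-triangular matrix whose zero-diagonal columns vanish is its number of nonzero
diagonal entries: the remaining columns, restricted to their own rows, form a triangular block
with nonzero determinant.
-/

open Finset

namespace Matrix

theorem IsLowerTriangular.submatrix_castLE_mul {R α β : Type*} [NonUnitalNonAssocSemiring R]
    {m n : ℕ} {A : Matrix (Fin n) (Fin n) R} (hA : A.IsLowerTriangular)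
    (B : Matrix (Fin n) α R) (h : m ≤ n) (c : β → α) :
    (A * B).submatrix (Fin.castLE h) c =
      A.submatrix (Fin.castLE h) (Fin.castLE h) * B.submatrix (Fin.castLE h) c := by
  ext a b
  refine (Fintype.sum_of_injective _ (Fin.castLE_injective h) _ _ (fun k hk => ?_)
    fun _ => rfl).symm
  have hak : Fin.castLE h a < k := by
    by_contra! hka
    exact hk ⟨⟨k, (Fin.le_def.mp hka).trans_lt a.isLt⟩, rfl⟩
  exact mul_eq_zero_of_left (hA (OrderDual.toDual_lt_toDual.mpr hak)) _

theorem IsLowerTriangular.linearIndependent_col_of_diag_ne_zero {K n : Type*} [Field K]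
    [Fintype n] [LinearOrder n] {M : Matrix n n K} (hM : M.IsLowerTriangular)
    {s : Finset n} (hs : ∀ j ∈ s, M j j ≠ 0) :
    LinearIndependent K fun j : s => M.col j := by
  have hdet : (M.submatrix (Subtype.val : s → n) Subtype.val).det ≠ 0 := by
    rw [det_of_isLowerTriangular (M.submatrix Subtype.val Subtype.val) fun _ _ hij => hM hij]
    exact Finset.prod_ne_zero_iff.mpr fun j _ => hs j j.2
  exact (linearIndependent_cols_of_det_ne_zero hdet).of_comp
    (LinearMap.funLeft K K (Subtype.val : s → n))

theorem IsLowerTriangular.rank_eq_card_diag_ne_zero {K n : Type*} [Field K] [DecidableEq K]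
    [Fintype n] [LinearOrder n] {M : Matrix n n K} (hM : M.IsLowerTriangular)
    (hzero : ∀ j, M j j = 0 → ∀ i, M i j = 0) :
    M.rank = #{j | M j j ≠ 0} := by
  set s : Finset n := {j | M j j ≠ 0}
  have hspan : Submodule.span K (Set.range M.col) =
      Submodule.span K (Set.range fun j : s => M.col j) := by
    refine le_antisymm (Submodule.span_le.mpr ?_) (Submodule.span_mono ?_)
    · rintro _ ⟨j, rfl⟩
      by_cases hj : M j j = 0
      · rw [show M.col j = 0 from funext (hzero j hj)]
        exact zero_mem _
      · exact Submodule.subset_span ⟨⟨j, by simpa [s] using hj⟩, rfl⟩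
    · rintro _ ⟨j, rfl⟩
      exact ⟨j, rfl⟩
  have hli := hM.linearIndependent_col_of_diag_ne_zero (s := s) fun j hj => by
    simpa [s] using hj
  rw [rank_eq_finrank_span_cols, hspan, finrank_span_eq_card hli, Fintype.card_coe]

end Matrix

theorem canonical_cholesky_leading_principal_general (T : ℕ) (S L : Matrix (Fin T) (Fin T) ℝ)
    (hL : IsCanonicalCholesky S L)
    (i : ℕ) (hi2 : i ≤ T) :
    IsCanonicalCholesky (S.submatrix (Fin.castLE hi2) (Fin.castLE hi2))
        (L.submatrix (Fin.castLE hi2) (Fin.castLE hi2)) ∧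
      L.submatrix (Fin.castLE hi2) (Fin.castLE hi2) *
          (L.submatrix (Fin.castLE hi2) (Fin.castLE hi2))ᵀ =
        S.submatrix (Fin.castLE hi2) (Fin.castLE hi2) := by
  obtain ⟨hlower, hdiag, rfl, -, hzero⟩ := hL
  set e := Fin.castLE hi2
  have hL : L.IsLowerTriangular := fun _ _ h => hlower _ _ h
  have hprod : L.submatrix e e * (L.submatrix e e)ᵀ = (L * Lᵀ).submatrix e e := by
    rw [hL.submatrix_castLE_mul, transpose_submatrix]
  have hLe : (L.submatrix e e).IsLowerTriangular := fun _ _ h => hlower _ _ h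
  refine ⟨⟨fun _ _ h => hLe h, fun _ => hdiag _, hprod, ?_, fun _ hj _ => hzero _ hj _⟩,
    hprod⟩
  rw [← hprod, rank_self_mul_transpose,
    hLe.rank_eq_card_diag_ne_zero fun _ hj _ => hzero _ hj _]
  exact congrArg card (filter_congr fun _ _ => (hdiag _).lt_iff_ne')

/-- If `L` is the canonical Cholesky factor of a positive semidefinite matrix `S`, then for
every `1 ≤ i ≤ T` the leading principal `i × i` submatrix of `L` is the canonical Cholesky
factor of the leading principal `i × i` submatrix of `S`; in particular
`L_i * L_iᵀ` equals the leading principal `i × i` submatrix of `S`. -/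
theorem canonical_cholesky_leading_principal (T : ℕ) (S L : Matrix (Fin T) (Fin T) ℝ)
    (hS : S.PosSemidef) (hL : IsCanonicalCholesky S L)
    (i : ℕ) (hi1 : 1 ≤ i) (hi2 : i ≤ T) :
    IsCanonicalCholesky (S.submatrix (Fin.castLE hi2) (Fin.castLE hi2))
        (L.submatrix (Fin.castLE hi2) (Fin.castLE hi2)) ∧
      L.submatrix (Fin.castLE hi2) (Fin.castLE hi2) *
          (L.submatrix (Fin.castLE hi2) (Fin.castLE hi2))ᵀ =
        S.submatrix (Fin.castLE hi2) (Fin.castLE hi2) :=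
  canonical_cholesky_leading_principal_general T S L hL i hi2
end

section
/- Let i ≥ 2, let m ∈ ℝ^i be a vector whose truncation to the first i-1 coordinates is m' ∈ ℝ^{i-1} and whose last coordinate is m_i, and suppose ‖m'‖₂ < 1 and ‖m‖₂ ≤ 1. Let L' be the canonical Cholesky factor of the (i-1)×(i-1) matrix I - m' m'ᵀ (which is invertible since ‖m'‖₂ < 1). Define the i×i block matrix L with top-left block L', top-right block zero, bottom-left row -m_i·(L'⁻¹ m')ᵀ, and bottom-right scalar √((1 - ‖m‖₂²)/(1 - ‖m'‖₂²)). Then L L ᵀ = I - m mᵀ, i.e., L is a Cholesky factor of I - m mᵀ. -/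
open Matrix

/-- The Euclidean norm `‖v‖₂ = √(∑ i, v i ^ 2)` of a vector `v ∈ ℝ^n`. -/
noncomputable def euclideanNorm {n : ℕ} (v : Fin n → ℝ) : ℝ :=
  Real.sqrt (∑ i, v i ^ 2)

/-! With `S = I - m' m'ᵀ = L' L'ᵀ` and `w = L'⁻¹ m'`, multiplying out the blocks of `L Lᵀ` leaves
the off-diagonal block `-mᵢ L' w = -mᵢ m'` and the corner `mᵢ² ‖w‖² + s²`. Since `m'` is an
eigenvector of `S` with eigenvalue `1 - ‖m'‖²`, we get `‖w‖² = m'ᵀ S⁻¹ m' = ‖m'‖² / (1 - ‖m'‖²)`,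
and the choice of `s` makes the corner `1 - mᵢ²`. -/

section
variable {ι R : Type*} [Fintype ι] [DecidableEq ι]

theorem Matrix.det_one_sub_vecMulVec [CommRing R] (u v : ι → R) :
    (1 - vecMulVec u v).det = 1 - v ⬝ᵥ u := by
  rw [sub_eq_add_neg, ← neg_vecMulVec, vecMulVec_eq Unit,
    det_one_add_replicateCol_mul_replicateRow, dotProduct_neg, ← sub_eq_add_neg]

theorem Matrix.one_sub_vecMulVec_self_mulVec [CommRing R] (v : ι → R) :
    (1 - vecMulVec v v) *ᵥ v = (1 - v ⬝ᵥ v) • v := by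
  rw [sub_mulVec, one_mulVec, vecMulVec_mulVec, op_smul_eq_smul, sub_smul, one_smul]

theorem Matrix.inv_one_sub_vecMulVec_self_mulVec [Field R] {v : ι → R} (hv : v ⬝ᵥ v ≠ 1) :
    (1 - vecMulVec v v)⁻¹ *ᵥ v = (1 - v ⬝ᵥ v)⁻¹ • v := by
  have hc : 1 - v ⬝ᵥ v ≠ 0 := sub_ne_zero.mpr hv.symm
  have hdet : IsUnit (1 - vecMulVec v v).det := by
    rw [det_one_sub_vecMulVec]; exact hc.isUnit
  rw [eq_inv_smul_iff₀ hc, ← mulVec_smul, ← one_sub_vecMulVec_self_mulVec, mulVec_mulVec,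
    nonsing_inv_mul _ hdet, one_mulVec]

theorem Matrix.inv_mulVec_dotProduct_inv_mulVec [CommRing R] {L S : Matrix ι ι R}
    (h : L * Lᵀ = S) (v : ι → R) :
    (L⁻¹ *ᵥ v) ⬝ᵥ (L⁻¹ *ᵥ v) = v ⬝ᵥ (S⁻¹ *ᵥ v) := by
  rw [← h, mul_inv_rev, ← transpose_nonsing_inv, ← mulVec_mulVec, dotProduct_mulVec v,
    vecMul_transpose]

theorem Matrix.isUnit_det_of_mul_transpose_eq [CommRing R] {L S : Matrix ι ι R}
    (h : L * Lᵀ = S) (hS : IsUnit S.det) : IsUnit L.det := by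
  rw [← h, det_mul, det_transpose] at hS
  exact isUnit_of_mul_isUnit_left hS

theorem Matrix.fromBlocks_mul_transpose_eq_one_sub_vecMulVec [CommRing R] {A : Matrix ι ι R}
    {v w : ι → R} {μ s : R} (hA : A * Aᵀ = 1 - vecMulVec v v) (hw : A *ᵥ w = v)
    (hs : μ ^ 2 * (w ⬝ᵥ w) + s ^ 2 = 1 - μ ^ 2) :
    fromBlocks A 0 (of fun _ : Fin 1 => fun j => -μ * w j) (of fun _ _ => s) *
        (fromBlocks A 0 (of fun _ : Fin 1 => fun j => -μ * w j) (of fun _ _ => s))ᵀ =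
      1 - vecMulVec (Sum.elim v fun _ => μ) (Sum.elim v fun _ => μ) := by
  rw [fromBlocks_transpose, fromBlocks_multiply]
  ext (i | i) (j | j)
  · simpa [one_apply, vecMulVec_apply] using congrFun₂ hA i j
  · simp [mul_apply, vecMulVec_apply, ← hw, mulVec, dotProduct, Finset.mul_sum, mul_comm,
      mul_left_comm]
  · simp [mul_apply, vecMulVec_apply, ← hw, mulVec, dotProduct, Finset.mul_sum, mul_comm,
      mul_left_comm]
  · have hww : ∑ k, (μ * w k) ^ 2 = μ ^ 2 * (w ⬝ᵥ w) := by
      rw [dotProduct, Finset.mul_sum]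
      exact Finset.sum_congr rfl fun _ _ => by ring
    simp [mul_apply, vecMulVec_apply, Subsingleton.elim i j, hww, ← sq, hs]

end

theorem Matrix.one_sub_vecMulVec_submatrix_equiv {l ι R : Type*} [DecidableEq l] [DecidableEq ι]
    [Ring R] (u : ι → R) (e : l ≃ ι) :
    (1 - vecMulVec u u).submatrix e e = 1 - vecMulVec (u ∘ e) (u ∘ e) := by
  ext i j
  simp [one_apply, vecMulVec_apply, e.injective.eq_iff]

theorem sum_elim_castSucc_last_comp_finSumFinEquiv_symm {α : Type*} {n : ℕ}
    (m : Fin (n + 1) → α) :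
    Sum.elim (fun j : Fin n => m j.castSucc) (fun _ : Fin 1 => m (Fin.last n)) ∘
      finSumFinEquiv.symm = m := by
  funext i
  refine Fin.lastCases ?_ (fun j => ?_) i <;> simp

theorem euclideanNorm_sq {n : ℕ} (v : Fin n → ℝ) : euclideanNorm v ^ 2 = v ⬝ᵥ v := by
  rw [euclideanNorm, Real.sq_sqrt (by positivity)]
  simp only [dotProduct, sq]

theorem dotProduct_self_eq_castSucc_add_last {R : Type*} [CommSemiring R] {n : ℕ}
    (m : Fin (n + 1) → R) :
    m ⬝ᵥ m =
      (fun j : Fin n => m j.castSucc) ⬝ᵥ (fun j : Fin n => m j.castSucc) + m (Fin.last n) ^ 2 := by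
  rw [dotProduct, Fin.sum_univ_castSucc, sq]; rfl

theorem cholesky_block_recursion_general (n : ℕ) (m : Fin (n + 1) → ℝ)
    (hm' : euclideanNorm (fun j : Fin n => m j.castSucc) < 1)
    (hm : euclideanNorm m ≤ 1)
    (L' : Matrix (Fin n) (Fin n) ℝ)
    (hL' : IsCanonicalCholesky
      (1 - vecMulVec (fun j : Fin n => m j.castSucc) (fun j : Fin n => m j.castSucc)) L')
    (L : Matrix (Fin (n + 1)) (Fin (n + 1)) ℝ)
    (hL : L =
      (fromBlocks L' 0
        (Matrix.of fun _ : Fin 1 => fun j : Fin n =>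
          -(m (Fin.last n)) * (L'⁻¹ *ᵥ fun j : Fin n => m j.castSucc) j)
        (Matrix.of fun _ : Fin 1 => fun _ : Fin 1 =>
          Real.sqrt ((1 - euclideanNorm m ^ 2) /
            (1 - euclideanNorm (fun j : Fin n => m j.castSucc) ^ 2)))).submatrix
        finSumFinEquiv.symm finSumFinEquiv.symm) :
    L * Lᵀ = 1 - vecMulVec m m := by
  set v : Fin n → ℝ := fun j => m j.castSucc
  set μ := m (Fin.last n)
  have hv : v ⬝ᵥ v < 1 := by
    rw [← euclideanNorm_sq]; exact pow_lt_one₀ (Real.sqrt_nonneg _) hm' two_ne_zero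
  have hvμ : v ⬝ᵥ v + μ ^ 2 ≤ 1 := by
    rw [← dotProduct_self_eq_castSucc_add_last, ← euclideanNorm_sq]
    exact pow_le_one₀ (Real.sqrt_nonneg _) hm
  have hfac : L' * L'ᵀ = 1 - vecMulVec v v := hL'.2.2.1
  have hdet : IsUnit L'.det := isUnit_det_of_mul_transpose_eq hfac <| by
    rw [det_one_sub_vecMulVec]; exact (sub_pos.2 hv).ne'.isUnit
  have hw : L' *ᵥ (L'⁻¹ *ᵥ v) = v := by rw [mulVec_mulVec, mul_nonsing_inv _ hdet, one_mulVec]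
  have hww : (L'⁻¹ *ᵥ v) ⬝ᵥ (L'⁻¹ *ᵥ v) = v ⬝ᵥ v / (1 - v ⬝ᵥ v) := by
    rw [inv_mulVec_dotProduct_inv_mulVec hfac, inv_one_sub_vecMulVec_self_mulVec hv.ne,
      dotProduct_smul, smul_eq_mul, inv_mul_eq_div]
  have hs : μ ^ 2 * ((L'⁻¹ *ᵥ v) ⬝ᵥ (L'⁻¹ *ᵥ v)) + Real.sqrt ((1 - euclideanNorm m ^ 2) /
      (1 - euclideanNorm v ^ 2)) ^ 2 = 1 - μ ^ 2 := by
    rw [euclideanNorm_sq, euclideanNorm_sq, dotProduct_self_eq_castSucc_add_last, hww,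
      Real.sq_sqrt (div_nonneg (by linarith) (by linarith))]
    field_simp [(sub_pos.2 hv).ne']
    ring
  rw [hL, transpose_submatrix, submatrix_mul_equiv,
    fromBlocks_mul_transpose_eq_one_sub_vecMulVec hfac hw hs,
    one_sub_vecMulVec_submatrix_equiv, sum_elim_castSucc_last_comp_finSumFinEquiv_symm]

/-- Recursive block formula for the Cholesky factor of `I - m mᵀ`: with `m ∈ ℝ^(n+1)`
(`n + 1 = i ≥ 2`), `m'` its truncation to the first `n` coordinates and `mᵢ = m (Fin.last n)`
its last coordinate, if `‖m'‖₂ < 1`, `‖m‖₂ ≤ 1` and `L'` is the canonical Cholesky factor of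
`I - m' m'ᵀ`, then the block matrix
`L = [[L', 0], [-mᵢ (L'⁻¹ m')ᵀ, √((1 - ‖m‖₂²)/(1 - ‖m'‖₂²))]]` satisfies `L * Lᵀ = I - m mᵀ`. -/
theorem cholesky_block_recursion (n : ℕ) (hn : 1 ≤ n) (m : Fin (n + 1) → ℝ)
    (hm' : euclideanNorm (fun j : Fin n => m j.castSucc) < 1)
    (hm : euclideanNorm m ≤ 1)
    (L' : Matrix (Fin n) (Fin n) ℝ)
    (hL' : IsCanonicalCholesky
      (1 - vecMulVec (fun j : Fin n => m j.castSucc) (fun j : Fin n => m j.castSucc)) L')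
    (L : Matrix (Fin (n + 1)) (Fin (n + 1)) ℝ)
    (hL : L =
      (fromBlocks L' 0
        (Matrix.of fun _ : Fin 1 => fun j : Fin n =>
          -(m (Fin.last n)) * (L'⁻¹ *ᵥ fun j : Fin n => m j.castSucc) j)
        (Matrix.of fun _ : Fin 1 => fun _ : Fin 1 =>
          Real.sqrt ((1 - euclideanNorm m ^ 2) /
            (1 - euclideanNorm (fun j : Fin n => m j.castSucc) ^ 2)))).submatrix
        finSumFinEquiv.symm finSumFinEquiv.symm) :
    L * Lᵀ = 1 - vecMulVec m m :=
  cholesky_block_recursion_general n m hm' hm L' hL' L hL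
end
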